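/- Let P be an orthogonal projection and U a unitary operator on a Hilbert space F. Then for every η on the unit circle, Re(η(P^⊥U + U*P)) ≤ I, where P^⊥ = I - P. Consequently ν(P^⊥U + U*P) ≤ 1. -/

import Mathlib

/-!
Write `A = P^⊥U + U*P`. Since `U*P` and `PU` are adjoint, `ηA` has the same real part as
`V = (ηP^⊥ + η̄P)U`, and `V` is an isometry because `ηP^⊥ + η̄P` is unitary and `U*U = 1`.
For an isometry, `1 - Re V = ½ (1 - V)*(1 - V) ≥ 0`. Testing `Re(ηA) ≤ 1` on a unit vector `x`
with `η = ⟪Ax, x⟫ / |⟪Ax, x⟫|` then gives `|⟪Ax, x⟫| ≤ 1`.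
-/

open ContinuousLinearMap

noncomputable def numRadius {F : Type*} [NormedAddCommGroup F] [InnerProductSpace ℂ F]
    (A : F →L[ℂ] F) : ℝ :=
  sSup {r : ℝ | ∃ h : F, ‖h‖ = 1 ∧ r = ‖(inner ℂ (A h) h : ℂ)‖}

noncomputable def reOp {F : Type*} [NormedAddCommGroup F] [InnerProductSpace ℂ F]
    [CompleteSpace F] (A : F →L[ℂ] F) : F →L[ℂ] F :=
  (2 : ℂ)⁻¹ • (A + adjoint A)

open ComplexConjugate ComplexStarModule

section StarAlgebra

variable {A : Type*} [Ring A] [StarRing A] [Algebra ℂ A] [StarModule ℂ A]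

lemma realPart_star (a : A) : ℜ (star a) = ℜ a := by
  ext
  simp [realPart_apply_coe, add_comm]

lemma realPart_add_star_right (a b : A) : ℜ (a + star b) = ℜ (a + b) := by
  rw [map_add, map_add, realPart_star]

lemma IsStarProjection.smul_one_sub_add_smul_mem_unitary {p : A} (hp : IsStarProjection p)
    {α β : ℂ} (hα : ‖α‖ = 1) (hβ : ‖β‖ = 1) : α • (1 - p) + β • p ∈ unitary A := by
  have hpp : p * p = p := hp.isIdempotentElem
  have hps : star p = p := hp.isSelfAdjoint
  rw [Unitary.mem_iff]
  constructor <;>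
  · simp only [star_add, star_smul, star_sub, star_one, hps, Complex.star_def, add_mul, mul_add,
      smul_mul_smul, sub_mul, mul_sub, one_mul, mul_one, hpp, sub_self, smul_zero, add_zero,
      zero_add]
    simp [Complex.conj_mul', Complex.mul_conj', hα, hβ]

end StarAlgebra

section CStarAlgebra

variable {A : Type*} [CStarAlgebra A] [PartialOrder A] [StarOrderedRing A]

lemma realPart_le_one_of_star_mul_self_eq_one {v : A} (hv : star v * v = 1) : (ℜ v : A) ≤ 1 := by
  have : 1 - (ℜ v : A) = (2 : ℝ)⁻¹ • (star (1 - v) * (1 - v)) := by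
    rw [realPart_apply_coe]
    simp only [star_sub, star_one, sub_mul, mul_sub, one_mul, mul_one, hv]
    module
  rw [← sub_nonneg, this]
  exact smul_nonneg (by norm_num) (star_mul_self_nonneg _)

theorem realPart_smul_one_sub_mul_add_star_mul_le_one {p u : A} (hp : IsStarProjection p)
    (hu : star u * u = 1) {η : ℂ} (hη : ‖η‖ = 1) :
    (ℜ (η • ((1 - p) * u + star u * p)) : A) ≤ 1 := by
  set w : A := η • (1 - p) + conj η • p
  have hw : w ∈ unitary A := hp.smul_one_sub_add_smul_mem_unitary hη (by simpa using hη)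
  have hwu : star (w * u) * (w * u) = 1 := by
    rw [star_mul, mul_assoc, ← mul_assoc (star w), Unitary.star_mul_self_of_mem hw, one_mul, hu]
  calc (ℜ (η • ((1 - p) * u + star u * p)) : A) = ℜ (w * u) := by
        rw [smul_add, ← realPart_add_star_right]
        simp [w, star_mul, hp.isSelfAdjoint.star_eq, add_mul]
    _ ≤ 1 := realPart_le_one_of_star_mul_self_eq_one hwu

end CStarAlgebra

lemma Complex.norm_le_of_forall_re_conj_mul_le {z : ℂ} {c : ℝ}
    (h : ∀ η : ℂ, ‖η‖ = 1 → (conj η * z).re ≤ c) : ‖z‖ ≤ c := by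
  rcases eq_or_ne z 0 with rfl | hz
  · simpa using h 1 (by simp)
  · have hz' : (‖z‖ : ℂ) ≠ 0 := by exact_mod_cast norm_ne_zero_iff.2 hz
    convert h (z / ‖z‖) (by simp [hz]) using 1
    rw [map_div₀, Complex.conj_ofReal, div_mul_eq_mul_div, Complex.conj_mul', pow_two,
      mul_div_cancel_right₀ _ hz', Complex.ofReal_re]

lemma numRadius_le {F : Type*} [NormedAddCommGroup F] [InnerProductSpace ℂ F] {T : F →L[ℂ] F}
    {c : ℝ} (hc : 0 ≤ c) (hT : ∀ x : F, ‖x‖ = 1 → ‖(inner ℂ (T x) x : ℂ)‖ ≤ c) :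
    numRadius T ≤ c :=
  Real.sSup_le (by rintro _ ⟨x, hx, rfl⟩; exact hT x hx) hc

section HilbertSpace

variable {F : Type*} [NormedAddCommGroup F] [InnerProductSpace ℂ F] [CompleteSpace F]

lemma reOp_eq_realPart (T : F →L[ℂ] F) : reOp T = ℜ T := by
  rw [reOp, realPart_apply_coe, star_eq_adjoint, ← Complex.coe_smul]
  norm_num

lemma re_inner_realPart_apply_self (T : F →L[ℂ] F) (x : F) :
    RCLike.re (inner ℂ ((ℜ T : F →L[ℂ] F) x) x) = RCLike.re (inner ℂ (T x) x) := by
  rw [realPart_apply_coe, star_eq_adjoint, ← Complex.coe_smul, smul_apply, add_apply,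
    inner_smul_left, inner_add_left, adjoint_inner_left, ← inner_conj_symm x (T x),
    Complex.add_conj]
  simp

lemma re_inner_apply_self_le_of_realPart_le_one {T : F →L[ℂ] F} (hT : (ℜ T : F →L[ℂ] F) ≤ 1)
    (x : F) : RCLike.re (inner ℂ (T x) x) ≤ ‖x‖ ^ 2 := by
  have := ((le_def _ _).1 hT).re_inner_nonneg_left x
  rw [sub_apply, inner_sub_left, map_sub, re_inner_realPart_apply_self, one_apply_eq_self,
    inner_self_eq_norm_sq] at this
  linarith

end HilbertSpace

theorem re_le_one_and_numRadius_le_one {F : Type*} [NormedAddCommGroup F]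
    [InnerProductSpace ℂ F] [CompleteSpace F]
    (P U : F →L[ℂ] F) (hP : IsSelfAdjoint P) (hP2 : P ∘L P = P)
    (hU1 : adjoint U ∘L U = 1) :
    (∀ η : ℂ, ‖η‖ = 1 →
      ((1 : F →L[ℂ] F) - reOp (η • (((1 - P) ∘L U) + (adjoint U ∘L P)))).IsPositive) ∧
    numRadius (((1 - P) ∘L U) + (adjoint U ∘L P)) ≤ 1 := by
  set A := ((1 - P) ∘L U) + (adjoint U ∘L P)
  have hre (η : ℂ) (hη : ‖η‖ = 1) : (ℜ (η • A) : F →L[ℂ] F) ≤ 1 :=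
    realPart_smul_one_sub_mul_add_star_mul_le_one ⟨hP2, hP⟩ hU1 hη
  refine ⟨fun η hη => by rw [reOp_eq_realPart, ← le_def]; exact hre η hη, ?_⟩
  refine numRadius_le zero_le_one fun x hx =>
    Complex.norm_le_of_forall_re_conj_mul_le fun η hη => ?_
  calc (conj η * inner ℂ (A x) x).re = RCLike.re (inner ℂ ((η • A) x) x) := by
        rw [smul_apply, inner_smul_left]
        rfl
    _ ≤ ‖x‖ ^ 2 := re_inner_apply_self_le_of_realPart_le_one (hre η hη) x
    _ = 1 := by simp [hx]
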